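/- arXiv:2408.00031 — 4 statements merged into one kernel-verified Lean document; each statement's English description precedes it below -/
import Mathlib

section
/- Let $c > -1$, $z_0 = (x_0, y_0) \in \mathbb{R}^{N+1}_+$ and $r > 0$, and let $V(z_0, r) = \int_{B(x_0,r) \times [y_0, y_0 + r)} y^c \, dx \, dy$. Then there exist constants $C_1, C_2 > 0$ depending only on $N$ and $c$ such that $C_1 \, r^{N+1+c} \left(\frac{y_0}{r}\right)^c \left(\frac{y_0}{r} \wedge 1\right)^{-c} \le V(z_0, r) \le C_2 \, r^{N+1+c} \left(\frac{y_0}{r}\right)^c \left(\frac{y_0}{r} \wedge 1\right)^{-c}$ for all $z_0 \in \mathbb{R}^{N+1}_+$ and $r > 0$. -/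
open Real MeasureTheory

/-- The weighted measure of the cylindric ball `Q(z0,r) = B(x0,r) × [y0, y0+r)`
with respect to the measure `y^c dx dy`. -/
noncomputable def cylVol (N : ℕ) (c : ℝ) (z0 : EuclideanSpace ℝ (Fin N) × ℝ) (r : ℝ) : ℝ :=
  ∫ z in (Metric.ball z0.1 r) ×ˢ (Set.Ico z0.2 (z0.2 + r)),
    z.2 ^ c

/-!
By Fubini, `V(z₀, r)` is `|B(0,1)| rᴺ` times `J = ∫_{y₀}^{y₀+r} y^c dy`, and the right-hand side
is `rᴺ · r · M^c` with `M = max(y₀, r)`, so everything reduces to `J ≍ r M^c`.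
On `[y₀ + r/2, y₀ + r]` the variable `y` is within a factor 2 of `M`, which gives the lower bound.
For the upper bound, if `r ≤ y₀` then `y` is within a factor 2 of `y₀ = M` on the whole interval;
if `y₀ ≤ r` the interval lies in `[0, 2r]`, where `∫ y^c = (2r)^{c+1}/(c+1)` is finite as `c > -1`.
-/

open Set

lemma two_rpow_neg_abs_mul_rpow_le {M y : ℝ} (c : ℝ) (hM : 0 < M) (hyM : y ≤ 2 * M)
    (hMy : M ≤ 2 * y) : 2 ^ (-|c|) * M ^ c ≤ y ^ c := by
  rcases le_or_gt 0 c with hc | hc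
  · calc 2 ^ (-|c|) * M ^ c = (M / 2) ^ c := by
          rw [abs_of_nonneg hc, div_rpow hM.le zero_le_two, rpow_neg zero_le_two]; ring
      _ ≤ y ^ c := rpow_le_rpow (by positivity) (by linarith) hc
  · calc 2 ^ (-|c|) * M ^ c = (2 * M) ^ c := by
          rw [abs_of_neg hc, neg_neg, mul_rpow zero_le_two hM.le]
      _ ≤ y ^ c := rpow_le_rpow_of_nonpos (by linarith) hyM hc.le

lemma rpow_le_two_rpow_abs_mul_rpow {M y : ℝ} (c : ℝ) (hM : 0 < M) (hyM : y ≤ 2 * M)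
    (hMy : M ≤ 2 * y) : y ^ c ≤ 2 ^ |c| * M ^ c := by
  have h := two_rpow_neg_abs_mul_rpow_le c (by linarith) hMy hyM
  rwa [rpow_neg zero_le_two, inv_mul_le_iff₀ (by positivity)] at h

lemma intervalIntegrable_rpow_of_pos {a b : ℝ} (c : ℝ) (ha : 0 < a) (hb : 0 < b) :
    IntervalIntegrable (fun y : ℝ => y ^ c) volume a b :=
  intervalIntegral.intervalIntegrable_rpow (Or.inr (notMem_uIcc_of_lt ha hb))

lemma two_rpow_neg_abs_div_two_mul_le_integral_rpow (c : ℝ) {y₀ r : ℝ} (hy₀ : 0 < y₀)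
    (hr : 0 < r) : 2 ^ (-|c|) / 2 * (r * max y₀ r ^ c) ≤ ∫ y in y₀..y₀ + r, y ^ c := by
  set M := max y₀ r
  have hy₀M : y₀ ≤ M := le_max_left y₀ r
  have hrM : r ≤ M := le_max_right y₀ r
  have hMle : M ≤ y₀ + r := max_le (by linarith) (by linarith)
  have hint := intervalIntegrable_rpow_of_pos c hy₀ (by linarith : 0 < y₀ + r)
  calc 2 ^ (-|c|) / 2 * (r * M ^ c) = ∫ _ in y₀ + r / 2..y₀ + r, 2 ^ (-|c|) * M ^ c := by
        rw [intervalIntegral.integral_const, smul_eq_mul]; ring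
    _ ≤ ∫ y in y₀ + r / 2..y₀ + r, y ^ c :=
        intervalIntegral.integral_mono_on (by linarith) intervalIntegrable_const
          (intervalIntegrable_rpow_of_pos c (by linarith) (by linarith)) fun y hy =>
          two_rpow_neg_abs_mul_rpow_le c (hr.trans_le hrM) (by linarith [hy.2])
            (by linarith [hy.1])
    _ ≤ ∫ y in y₀..y₀ + r, y ^ c := by
        refine intervalIntegral.integral_mono_interval (by linarith) (by linarith) le_rfl ?_ hint
        filter_upwards [ae_restrict_mem measurableSet_Ioc] with y hy
        exact rpow_nonneg (hy₀.trans hy.1).le c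

lemma integral_rpow_le_of_length_le (c : ℝ) {y₀ r : ℝ} (hy₀ : 0 < y₀) (hr : 0 ≤ r)
    (hry₀ : r ≤ y₀) :
    ∫ y in y₀..y₀ + r, y ^ c ≤ 2 ^ |c| * (r * y₀ ^ c) := by
  calc ∫ y in y₀..y₀ + r, y ^ c ≤ ∫ _ in y₀..y₀ + r, 2 ^ |c| * y₀ ^ c :=
        intervalIntegral.integral_mono_on (by linarith)
          (intervalIntegrable_rpow_of_pos c hy₀ (by linarith)) intervalIntegrable_const
          fun y hy => rpow_le_two_rpow_abs_mul_rpow c hy₀ (by linarith [hy.2])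
            (by linarith [hy.1])
    _ = 2 ^ |c| * (r * y₀ ^ c) := by
        rw [intervalIntegral.integral_const, smul_eq_mul]; ring

lemma integral_rpow_le_of_le_length {c y₀ r : ℝ} (hc : -1 < c) (hy₀ : 0 ≤ y₀) (hy₀r : y₀ ≤ r) :
    ∫ y in y₀..y₀ + r, y ^ c ≤ 2 ^ (c + 1) / (c + 1) * (r * r ^ c) := by
  have hc₁ : c + 1 ≠ 0 := by linarith
  calc ∫ y in y₀..y₀ + r, y ^ c ≤ ∫ y in 0..2 * r, y ^ c := by
        refine intervalIntegral.integral_mono_interval hy₀ (by linarith) (by linarith) ?_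
          (intervalIntegral.intervalIntegrable_rpow' hc)
        filter_upwards [ae_restrict_mem measurableSet_Ioc] with y hy
        exact rpow_nonneg hy.1.le c
    _ = 2 ^ (c + 1) / (c + 1) * (r * r ^ c) := by
        rw [integral_rpow (Or.inl hc), zero_rpow hc₁, sub_zero,
          mul_rpow zero_le_two (by linarith), rpow_add_one' (x := r) (by linarith) hc₁]
        ring

lemma integral_rpow_le {c y₀ r : ℝ} (hc : -1 < c) (hy₀ : 0 < y₀) (hr : 0 < r) :
    ∫ y in y₀..y₀ + r, y ^ c ≤ (2 ^ |c| + 2 ^ (c + 1) / (c + 1)) * (r * max y₀ r ^ c) := by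
  have hc₁ : 0 < c + 1 := by linarith
  rcases le_total r y₀ with h | h
  · have hJ := integral_rpow_le_of_length_le c hy₀ hr.le h
    have hpos : 0 ≤ 2 ^ (c + 1) / (c + 1) * (r * y₀ ^ c) := by positivity
    rw [max_eq_left h]
    linarith
  · have hJ := integral_rpow_le_of_le_length hc hy₀.le h
    have hpos : 0 ≤ 2 ^ |c| * (r * r ^ c) := by positivity
    rw [max_eq_right h]
    linarith

lemma rpow_mul_min_one_rpow_neg {t : ℝ} (c : ℝ) (ht : 0 < t) :
    t ^ c * min t 1 ^ (-c) = max t 1 ^ c := by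
  rcases le_total t 1 with h | h
  · rw [min_eq_left h, max_eq_right h, ← rpow_add ht, add_neg_cancel, rpow_zero, one_rpow]
  · rw [min_eq_right h, max_eq_left h, one_rpow, mul_one]

lemma cylVol_eq_mul_integral (N : ℕ) (c : ℝ) (z0 : EuclideanSpace ℝ (Fin N) × ℝ) {r : ℝ}
    (hr : 0 < r) :
    cylVol N c z0 r = r ^ N * volume.real (Metric.ball (0 : EuclideanSpace ℝ (Fin N)) 1) *
      ∫ y in z0.2..z0.2 + r, y ^ c := by
  have h := setIntegral_prod_mul (μ := (volume : Measure (EuclideanSpace ℝ (Fin N))))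
    (ν := (volume : Measure ℝ)) (fun _ => (1 : ℝ)) (fun y => y ^ c) (Metric.ball z0.1 r)
    (Ico z0.2 (z0.2 + r))
  simp only [one_mul, setIntegral_const, smul_eq_mul, mul_one] at h
  rw [cylVol, Measure.volume_eq_prod, h, intervalIntegral.integral_of_le (by linarith),
    integral_Ico_eq_integral_Ioo, integral_Ioc_eq_integral_Ioo, measureReal_def,
    Measure.addHaar_ball_of_pos volume _ hr, finrank_euclideanSpace_fin, ENNReal.toReal_mul,
    ENNReal.toReal_ofReal (by positivity), measureReal_def]

theorem cylVol_two_sided_estimate (N : ℕ) (c : ℝ) (hc : -1 < c) :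
    ∃ C₁ C₂ : ℝ, 0 < C₁ ∧ 0 < C₂ ∧
      ∀ (z0 : EuclideanSpace ℝ (Fin N) × ℝ), 0 < z0.2 → ∀ r : ℝ, 0 < r →
        C₁ * (r ^ ((N : ℝ) + 1 + c) * (z0.2 / r) ^ c * (min (z0.2 / r) 1) ^ (-c))
            ≤ cylVol N c z0 r ∧
          cylVol N c z0 r ≤
            C₂ * (r ^ ((N : ℝ) + 1 + c) * (z0.2 / r) ^ c * (min (z0.2 / r) 1) ^ (-c)) := by
  have hc₁ : 0 < c + 1 := by linarith
  set K := volume.real (Metric.ball (0 : EuclideanSpace ℝ (Fin N)) 1)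
  have hK : 0 < K := ENNReal.toReal_pos (Metric.measure_ball_pos volume 0 one_pos).ne'
    measure_ball_lt_top.ne
  refine ⟨K * (2 ^ (-|c|) / 2), K * (2 ^ |c| + 2 ^ (c + 1) / (c + 1)),
    mul_pos hK (by positivity), mul_pos hK (by positivity), fun z0 hy₀ r hr => ?_⟩
  have hweight : r ^ ((N : ℝ) + 1 + c) * (z0.2 / r) ^ c * min (z0.2 / r) 1 ^ (-c) =
      r ^ N * (r * max z0.2 r ^ c) := by
    have hmax : max (z0.2 / r) 1 = max z0.2 r / r := by
      rw [← max_div_div_right hr.le, div_self hr.ne']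
    rw [mul_assoc, rpow_mul_min_one_rpow_neg c (div_pos hy₀ hr), hmax, rpow_add hr, rpow_add hr,
      rpow_natCast, rpow_one, div_rpow (le_max_of_le_right hr.le) hr.le]
    field_simp
  have hrK : 0 ≤ r ^ N * K := by positivity
  rw [cylVol_eq_mul_integral N c z0 hr, hweight]
  constructor
  · linear_combination
      mul_le_mul_of_nonneg_left (two_rpow_neg_abs_div_two_mul_le_integral_rpow c hy₀ hr) hrK
  · linear_combination mul_le_mul_of_nonneg_left (integral_rpow_le hc hy₀ hr) hrK
end

section
/- Let $c > -1$ and $V(z_0, r) = \int_{B(x_0,r) \times [y_0,y_0+r)} y^c \, dx \, dy$. Then there exists a constant $C > 0$ such that $V(z_0, 2r) \le C \, V(z_0, r)$ for all $z_0 \in \mathbb{R}^{N+1}_+$ and $r > 0$ (doubling property). -/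
open Real MeasureTheory

/-!
The weighted volume of `B(x₀, r) × [y₀, y₀ + r)` factors as the Lebesgue measure of the ball
times `∫_{y₀}^{y₀+r} y^c dy`. Doubling `r` multiplies the first factor by `2^N`. For the second,
the substitution `y = 2u - y₀` maps `[y₀, y₀ + r)` onto `[y₀, y₀ + 2r)`, and since
`u ≤ 2u - y₀ ≤ 2u` there, `(2u - y₀)^c ≤ max 1 2^c · u^c` whatever the sign of `c`.
-/

open Metric Module

theorem setIntegral_prod_fun_snd {α β E : Type*} [MeasurableSpace α] [MeasurableSpace β]
    [NormedAddCommGroup E] [NormedSpace ℝ E]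
    (μ : Measure α) (ν : Measure β) [SFinite μ] [SFinite ν] (f : β → E) (s : Set α) (t : Set β) :
    ∫ z in s ×ˢ t, f z.2 ∂μ.prod ν = μ.real s • ∫ y in t, f y ∂ν := by
  rw [← Measure.prod_restrict, integral_fun_snd, measureReal_restrict_apply_univ]

theorem addHaar_real_ball_mul {E : Type*} [NormedAddCommGroup E] [NormedSpace ℝ E]
    [MeasurableSpace E] [BorelSpace E] [FiniteDimensional ℝ E] (μ : Measure E) [μ.IsAddHaarMeasure]
    (x : E) {s : ℝ} (hs : 0 < s) (r : ℝ) :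
    μ.real (ball x (s * r)) = s ^ finrank ℝ E * μ.real (ball x r) := by
  rw [measureReal_def, measureReal_def, Measure.addHaar_ball_mul_of_pos μ x hs,
    Measure.addHaar_ball_center μ x, ENNReal.toReal_mul, ENNReal.toReal_ofReal (by positivity)]

theorem rpow_two_mul_sub_le {a u : ℝ} (ha : 0 < a) (hau : a ≤ u) (c : ℝ) :
    (2 * u - a) ^ c ≤ max 1 (2 ^ c) * u ^ c := by
  have hu : 0 < u := ha.trans_le hau
  rcases le_or_gt 0 c with hc | hc
  · calc (2 * u - a) ^ c ≤ (2 * u) ^ c := by gcongr <;> linarith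
      _ = 2 ^ c * u ^ c := mul_rpow zero_le_two hu.le
      _ ≤ max 1 (2 ^ c) * u ^ c := by gcongr; exact le_max_right _ _
  · calc (2 * u - a) ^ c ≤ u ^ c := rpow_le_rpow_of_nonpos hu (by linarith) hc.le
      _ ≤ max 1 (2 ^ c) * u ^ c := le_mul_of_one_le_left (by positivity) (le_max_left _ _)

theorem integral_rpow_Ico_doubling (c : ℝ) {a r : ℝ} (ha : 0 < a) (hr : 0 < r) :
    ∫ y in Set.Ico a (a + 2 * r), y ^ c ≤ 2 * max 1 (2 ^ c) * ∫ y in Set.Ico a (a + r), y ^ c := by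
  have hge : ∀ u ∈ Set.uIcc a (a + r), a ≤ u := fun u hu =>
    (Set.uIcc_of_le (by linarith : a ≤ a + r) ▸ hu).1
  simp only [integral_Ico_eq_integral_Ioo, ← integral_Ioc_eq_integral_Ioo,
    ← intervalIntegral.integral_of_le (by linarith : a ≤ a + 2 * r),
    ← intervalIntegral.integral_of_le (by linarith : a ≤ a + r)]
  have hsubst : ∫ y in a..a + 2 * r, y ^ c = 2 * ∫ u in a..a + r, (2 * u - a) ^ c := by
    rw [intervalIntegral.integral_comp_mul_sub (fun y => y ^ c) two_ne_zero, smul_eq_mul,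
      mul_inv_cancel_left₀ two_ne_zero]
    ring_nf
  have hmono : ∫ u in a..a + r, (2 * u - a) ^ c ≤ ∫ u in a..a + r, max 1 (2 ^ c) * u ^ c := by
    apply intervalIntegral.integral_mono_on (by linarith)
    · exact ContinuousOn.intervalIntegrable (ContinuousOn.rpow_const (by fun_prop) fun u hu =>
        Or.inl (by linarith [hge u hu] : 0 < 2 * u - a).ne')
    · exact ContinuousOn.intervalIntegrable (continuousOn_const.mul
        (ContinuousOn.rpow_const continuousOn_id fun u hu => Or.inl (ha.trans_le (hge u hu)).ne'))
    · exact fun u hu => rpow_two_mul_sub_le ha hu.1 c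
  rw [hsubst, mul_assoc, ← intervalIntegral.integral_const_mul (max 1 (2 ^ c))]
  exact mul_le_mul_of_nonneg_left hmono zero_le_two

theorem cylVol_eq_measureReal_ball_mul (N : ℕ) (c : ℝ) (z0 : EuclideanSpace ℝ (Fin N) × ℝ)
    (r : ℝ) :
    cylVol N c z0 r = volume.real (ball z0.1 r) * ∫ y in Set.Ico z0.2 (z0.2 + r), y ^ c := by
  rw [cylVol, Measure.volume_eq_prod]
  exact setIntegral_prod_fun_snd volume volume (fun y : ℝ => y ^ c) _ _

theorem cylVol_doubling_general (N : ℕ) (c : ℝ) :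
    ∃ C : ℝ, 0 < C ∧
      ∀ (z0 : EuclideanSpace ℝ (Fin N) × ℝ), 0 < z0.2 → ∀ r : ℝ, 0 < r →
        cylVol N c z0 (2 * r) ≤ C * cylVol N c z0 r := by
  refine ⟨2 ^ N * (2 * max 1 (2 ^ c)), by positivity, fun z0 hy r hr => ?_⟩
  simp only [cylVol_eq_measureReal_ball_mul, addHaar_real_ball_mul volume z0.1 two_pos,
    finrank_euclideanSpace_fin]
  calc 2 ^ N * volume.real (ball z0.1 r) * ∫ y in Set.Ico z0.2 (z0.2 + 2 * r), y ^ c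
      ≤ 2 ^ N * volume.real (ball z0.1 r) *
          (2 * max 1 (2 ^ c) * ∫ y in Set.Ico z0.2 (z0.2 + r), y ^ c) := by
        gcongr
        exact integral_rpow_Ico_doubling c hy hr
    _ = 2 ^ N * (2 * max 1 (2 ^ c)) *
          (volume.real (ball z0.1 r) * ∫ y in Set.Ico z0.2 (z0.2 + r), y ^ c) := by ring

theorem cylVol_doubling (N : ℕ) (c : ℝ) (hc : -1 < c) :
    ∃ C : ℝ, 0 < C ∧
      ∀ (z0 : EuclideanSpace ℝ (Fin N) × ℝ), 0 < z0.2 → ∀ r : ℝ, 0 < r →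
        cylVol N c z0 (2 * r) ≤ C * cylVol N c z0 r :=
  cylVol_doubling_general N c
end

section
/- Let $c \in \mathbb{R}$, $C, k > 0$. Then there exist constants $C', k' > 0$ such that for all $t > 0$ and all $z_1 = (x_1,y_1), z_2 = (x_2,y_2) \in \mathbb{R}^{N+1}_+$: $C\, t^{-(N+1)/2} y_1^{-c/2}\left(1 \wedge \frac{y_1}{\sqrt{t}}\right)^{c/2} y_2^{-c/2}\left(1 \wedge \frac{y_2}{\sqrt{t}}\right)^{c/2} \exp\left(-\frac{|z_1 - z_2|^2}{k t}\right) \le C'\, t^{-(N+1)/2} y_2^{-c} \left(1 \wedge \frac{y_2}{\sqrt{t}}\right)^{c} \exp\left(-\frac{|z_1 - z_2|^2}{k' t}\right)$. -/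
/-!
Since `y ^ (-e) * min 1 (y / √t) ^ e = max y √t ^ (-e)`, it suffices to trade the weight
`max y₁ √t ^ (-c/2)` for `max y₂ √t ^ (-c/2)` against half of the Gaussian. The two differ by at
most the factor `(1 + u) ^ (|c|/2) ≤ exp (|c| u / 2)`, where `u = |y₁ - y₂| / √t`, and
`exp (-u² / (2k))` absorbs this, leaving the constant `exp (c² k / 8)`.
-/

open Real

lemma rpow_neg_mul_min_one_div_rpow {y s : ℝ} (hy : 0 < y) (hs : 0 < s) (e : ℝ) :
    y ^ (-e) * min 1 (y / s) ^ e = max y s ^ (-e) := by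
  have hmax : 0 < max y s := hy.trans_le (le_max_left y s)
  have hmin : min 1 (y / s) = y / max y s := by
    rcases le_total y s with h | h
    · rw [max_eq_right h, min_eq_right ((div_le_one hs).mpr h)]
    · rw [max_eq_left h, min_eq_left ((one_le_div hs).mpr h), div_self hy.ne']
  rw [hmin, div_rpow hy.le hmax.le, rpow_neg hy.le, rpow_neg hmax.le]
  field_simp

lemma max_le_max_mul_one_add_abs_sub_div {s : ℝ} (hs : 0 < s) (a b : ℝ) :
    max a s ≤ (1 + |a - b| / s) * max b s := by
  have hdiff : max a s - max b s ≤ |a - b| :=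
    (le_abs_self _).trans (abs_max_sub_max_le_abs a b s)
  have hscale : |a - b| ≤ |a - b| / s * max b s := by
    rw [div_mul_eq_mul_div, le_div_iff₀ hs]
    exact mul_le_mul_of_nonneg_left (le_max_right b s) (abs_nonneg _)
  rw [one_add_mul]
  linarith

lemma rpow_le_rpow_abs_mul_rpow {a b r : ℝ} (ha : 0 < a) (hb : 0 < b)
    (hab : a ≤ r * b) (hba : b ≤ r * a) (p : ℝ) :
    a ^ p ≤ r ^ |p| * b ^ p := by
  have hr : 0 < r := pos_of_mul_pos_left (hb.trans_le hba) ha.le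
  rcases le_total 0 p with hp | hp
  · rw [abs_of_nonneg hp, ← mul_rpow hr.le hb.le]
    exact rpow_le_rpow ha.le hab hp
  · rw [abs_of_nonpos hp]
    have hpow : r ^ p * a ^ p ≤ b ^ p := by
      rw [← mul_rpow hr.le ha.le]
      exact rpow_le_rpow_of_nonpos hb hba hp
    calc a ^ p = r ^ (-p) * (r ^ p * a ^ p) := by
          rw [← mul_assoc, ← rpow_add hr, neg_add_cancel, rpow_zero, one_mul]
      _ ≤ r ^ (-p) * b ^ p := by gcongr

lemma one_add_rpow_le_exp_mul {u α : ℝ} (hu : -1 ≤ u) (hα : 0 ≤ α) :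
    (1 + u) ^ α ≤ exp (α * u) := by
  calc (1 + u) ^ α ≤ exp u ^ α :=
        rpow_le_rpow (by linarith) (by linarith [add_one_le_exp u]) hα
    _ = exp (α * u) := by rw [← exp_mul, mul_comm]

lemma mul_sub_sq_div_le {k : ℝ} (hk : 0 < k) (α u : ℝ) :
    α * u - u ^ 2 / (2 * k) ≤ α ^ 2 * k / 2 := by
  have hsq : α ^ 2 * k / 2 - (α * u - u ^ 2 / (2 * k)) = (u - α * k) ^ 2 / (2 * k) := by
    field_simp
    ring
  have : 0 ≤ (u - α * k) ^ 2 / (2 * k) := by positivity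
  linarith

lemma max_rpow_mul_exp_le {s k : ℝ} (hs : 0 < s) (hk : 0 < k) (y₁ y₂ p : ℝ) :
    max y₁ s ^ p * exp (-(y₁ - y₂) ^ 2 / (2 * k * s ^ 2)) ≤
      exp (p ^ 2 * k / 2) * max y₂ s ^ p := by
  set u := |y₁ - y₂| / s with hu_def
  have hu : 0 ≤ u := by positivity
  have hgauss : -(y₁ - y₂) ^ 2 / (2 * k * s ^ 2) = -u ^ 2 / (2 * k) := by
    rw [hu_def, div_pow, sq_abs]
    field_simp
  have hratio : max y₁ s ^ p ≤ (1 + u) ^ |p| * max y₂ s ^ p :=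
    rpow_le_rpow_abs_mul_rpow (hs.trans_le (le_max_right _ _)) (hs.trans_le (le_max_right _ _))
      (max_le_max_mul_one_add_abs_sub_div hs y₁ y₂)
      (by simpa only [abs_sub_comm] using max_le_max_mul_one_add_abs_sub_div hs y₂ y₁) p
  calc max y₁ s ^ p * exp (-(y₁ - y₂) ^ 2 / (2 * k * s ^ 2))
      ≤ (1 + u) ^ |p| * max y₂ s ^ p * exp (-u ^ 2 / (2 * k)) := by
        rw [hgauss]; gcongr
    _ ≤ exp (|p| * u) * max y₂ s ^ p * exp (-u ^ 2 / (2 * k)) := by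
        gcongr
        exact one_add_rpow_le_exp_mul (by linarith) (abs_nonneg p)
    _ = exp (|p| * u - u ^ 2 / (2 * k)) * max y₂ s ^ p := by
        rw [sub_eq_add_neg, exp_add, neg_div]; ring
    _ ≤ exp (p ^ 2 * k / 2) * max y₂ s ^ p := by
        gcongr
        simpa only [sq_abs] using mul_sub_sq_div_le hk |p| u

theorem symmetric_to_onesided_kernel_bound (N : ℕ) (c C k : ℝ) (hC : 0 < C) (hk : 0 < k) :
    ∃ C' k' : ℝ, 0 < C' ∧ 0 < k' ∧
      ∀ t : ℝ, 0 < t →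
        ∀ z₁ z₂ : EuclideanSpace ℝ (Fin N) × ℝ, 0 < z₁.2 → 0 < z₂.2 →
          C * t ^ (-((N : ℝ) + 1) / 2) *
              (z₁.2 ^ (-c / 2) * (min 1 (z₁.2 / Real.sqrt t)) ^ (c / 2)) *
              (z₂.2 ^ (-c / 2) * (min 1 (z₂.2 / Real.sqrt t)) ^ (c / 2)) *
              Real.exp (-(‖z₁.1 - z₂.1‖ ^ 2 + (z₁.2 - z₂.2) ^ 2) / (k * t)) ≤
            C' * t ^ (-((N : ℝ) + 1) / 2) *
              (z₂.2 ^ (-c) * (min 1 (z₂.2 / Real.sqrt t)) ^ c) *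
              Real.exp (-(‖z₁.1 - z₂.1‖ ^ 2 + (z₁.2 - z₂.2) ^ 2) / (k' * t)) := by
  refine ⟨C * exp (c ^ 2 * k / 8), 2 * k, by positivity, by positivity, ?_⟩
  rintro t ht ⟨x₁, y₁⟩ ⟨x₂, y₂⟩ (hy₁ : 0 < y₁) (hy₂ : 0 < y₂)
  dsimp only
  set s := √t
  have hs : 0 < s := sqrt_pos.mpr ht
  set D := ‖x₁ - x₂‖ ^ 2 + (y₁ - y₂) ^ 2
  have hsplit : exp (-D / (k * t)) ≤
      exp (-(y₁ - y₂) ^ 2 / (2 * k * s ^ 2)) * exp (-D / (2 * k * t)) := by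
    have hyD : (y₁ - y₂) ^ 2 ≤ D := le_add_of_nonneg_left (by positivity)
    rw [← exp_add, exp_le_exp, sq_sqrt ht.le, ← add_div,
      div_le_div_iff₀ (by positivity) (by positivity)]
    nlinarith [mul_pos hk ht]
  have hsq : max y₂ s ^ (-c) = max y₂ s ^ (-(c / 2)) * max y₂ s ^ (-(c / 2)) := by
    rw [← rpow_add (hs.trans_le (le_max_right _ _))]; congr 1; ring
  rw [neg_div 2 c, rpow_neg_mul_min_one_div_rpow hy₁ hs, rpow_neg_mul_min_one_div_rpow hy₂ hs,
    rpow_neg_mul_min_one_div_rpow hy₂ hs, hsq]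
  calc C * t ^ (-((N : ℝ) + 1) / 2) * max y₁ s ^ (-(c / 2)) * max y₂ s ^ (-(c / 2)) *
        exp (-D / (k * t))
      ≤ C * t ^ (-((N : ℝ) + 1) / 2) * max y₁ s ^ (-(c / 2)) * max y₂ s ^ (-(c / 2)) *
          (exp (-(y₁ - y₂) ^ 2 / (2 * k * s ^ 2)) * exp (-D / (2 * k * t))) := by gcongr
    _ = C * t ^ (-((N : ℝ) + 1) / 2) * max y₂ s ^ (-(c / 2)) * exp (-D / (2 * k * t)) *
          (max y₁ s ^ (-(c / 2)) * exp (-(y₁ - y₂) ^ 2 / (2 * k * s ^ 2))) := by ring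
    _ ≤ C * t ^ (-((N : ℝ) + 1) / 2) * max y₂ s ^ (-(c / 2)) * exp (-D / (2 * k * t)) *
          (exp ((-(c / 2)) ^ 2 * k / 2) * max y₂ s ^ (-(c / 2))) :=
        mul_le_mul_of_nonneg_left (max_rpow_mul_exp_le hs hk y₁ y₂ _) (by positivity)
    _ = _ := by ring_nf
end

section
/- Let $c > -1$ and $t > 0$. Then $\int_{\mathbb{R}^{N+1}_+} t^{-(N+1)/2} \left(1 \wedge \frac{y}{\sqrt{t}}\right)^{c} \exp\left(-\frac{|z - z_0|^2}{\kappa t}\right) y^{-c} \cdot y^c \, dz < \infty$ for every $z_0 \in \mathbb{R}^{N+1}_+$ and $\kappa > 0$; moreover this integral is bounded uniformly in $z_0$ and $t$, i.e. there is $C = C(N, c, \kappa)$ with $\int_{\mathbb{R}^{N+1}_+} t^{-(N+1)/2} \left(1 \wedge \frac{y}{\sqrt{t}}\right)^{c} \exp\left(-\frac{|z - z_0|^2}{\kappa t}\right) dz \le C$ for all $t > 0$ and $z_0 \in \mathbb{R}^{N+1}_+$. -/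
/-!
The kernel factors into a Gaussian in `x` and a one-dimensional factor in `y`. The Gaussian
integrates to `(π κ t)^(N/2)`, which cancels `t^(-N/2)`. In `y`, split at `y = √t`: below it the
weight is `(y/√t)^c`, integrable near `0` because `c > -1`, with integral `√t/(c+1)`; above it the
weight is `1` and the Gaussian contributes at most `√(π κ t)`. The remaining factor `(√t)⁻¹`
cancels both.
-/

open Real MeasureTheory Set
open scoped ENNReal

theorem setLIntegral_upperHalfSpace_mul {X : Type*} [MeasureSpace X]
    [SFinite (volume : Measure X)] {f : X → ℝ≥0∞} {g : ℝ → ℝ≥0∞} (hf : AEMeasurable f)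
    (hg : AEMeasurable g) :
    ∫⁻ z in {z : X × ℝ | 0 < z.2}, f z.1 * g z.2 = (∫⁻ x, f x) * ∫⁻ y in Ioi 0, g y := by
  rw [show {z : X × ℝ | 0 < z.2} = univ ×ˢ Ioi 0 by ext; simp, Measure.volume_eq_prod,
    ← Measure.prod_restrict, Measure.restrict_univ]
  exact lintegral_prod_mul hf hg.restrict

section InnerProductSpace

variable {V : Type*} [NormedAddCommGroup V] [InnerProductSpace ℝ V] [FiniteDimensional ℝ V]
  [MeasurableSpace V] [BorelSpace V]

theorem lintegral_exp_neg_norm_sub_sq_div {a : ℝ} (ha : 0 < a) (w : V) :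
    ∫⁻ x, ENNReal.ofReal (exp (-‖x - w‖ ^ 2 / a)) =
      ENNReal.ofReal ((π * a) ^ ((Module.finrank ℝ V : ℝ) / 2)) := by
  have hint : ∫ x : V, exp (-‖x‖ ^ 2 / a) = (π * a) ^ ((Module.finrank ℝ V : ℝ) / 2) := by
    have hexp : ∀ x : V, exp (-‖x‖ ^ 2 / a) = exp (-a⁻¹ * ‖x‖ ^ 2) := fun x => by ring_nf
    simp_rw [hexp, GaussianFourier.integral_rexp_neg_mul_sq_norm (inv_pos.2 ha), div_inv_eq_mul]
  rw [lintegral_sub_right_eq_self (fun x => ENNReal.ofReal (exp (-‖x‖ ^ 2 / a))) w, ← hint,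
    ofReal_integral_eq_lintegral_ofReal
      (Integrable.of_integral_ne_zero (by rw [hint]; positivity))
      (Filter.Eventually.of_forall fun _ => (exp_pos _).le)]

theorem lintegral_rpow_mul_exp_neg_norm_sub_sq_div_mul {κ t : ℝ} (hκ : 0 < κ) (ht : 0 < t)
    (w : V) :
    ∫⁻ x, ENNReal.ofReal (t ^ (-(Module.finrank ℝ V : ℝ) / 2) * exp (-‖x - w‖ ^ 2 / (κ * t))) =
      ENNReal.ofReal ((π * κ) ^ ((Module.finrank ℝ V : ℝ) / 2)) := by
  have ht' : 0 ≤ t ^ (-(Module.finrank ℝ V : ℝ) / 2) := rpow_nonneg ht.le _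
  simp_rw [ENNReal.ofReal_mul ht']
  rw [lintegral_const_mul _ (by fun_prop), lintegral_exp_neg_norm_sub_sq_div (by positivity) w,
    ← ENNReal.ofReal_mul ht', ← mul_assoc, mul_rpow (by positivity) ht.le, mul_comm,
    mul_assoc, ← rpow_add ht, neg_div, add_neg_cancel, rpow_zero, mul_one]

end InnerProductSpace

theorem lintegral_exp_neg_sub_sq_div {a : ℝ} (ha : 0 < a) (w : ℝ) :
    ∫⁻ y, ENNReal.ofReal (exp (-(y - w) ^ 2 / a)) = ENNReal.ofReal √(π * a) := by
  simpa [sqrt_eq_rpow, sq_abs] using lintegral_exp_neg_norm_sub_sq_div ha w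

theorem setLIntegral_Ioc_div_rpow {s c : ℝ} (hs : 0 < s) (hc : -1 < c) :
    ∫⁻ y in Ioc 0 s, ENNReal.ofReal ((y / s) ^ c) = ENNReal.ofReal (s / (c + 1)) := by
  have hint : ∫ y in Ioc 0 s, (y / s) ^ c = s / (c + 1) := by
    rw [← intervalIntegral.integral_of_le hs.le, intervalIntegral.integral_comp_div (· ^ c) hs.ne',
      integral_rpow (Or.inl hc), zero_div, div_self hs.ne', one_rpow,
      zero_rpow (by linarith), smul_eq_mul]
    ring
  rw [← hint, ofReal_integral_eq_lintegral_ofReal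
    (Integrable.of_integral_ne_zero (by rw [hint]; exact (div_pos hs (by linarith)).ne'))]
  exact (ae_restrict_iff' measurableSet_Ioc).2 (Filter.Eventually.of_forall fun y hy =>
    rpow_nonneg (div_nonneg hy.1.le hs.le) c)

theorem setLIntegral_Ioi_min_one_div_rpow_mul_exp_le {s c a : ℝ} (hs : 0 < s) (hc : -1 < c)
    (ha : 0 < a) (w : ℝ) :
    ∫⁻ y in Ioi 0, ENNReal.ofReal (min 1 (y / s) ^ c * exp (-(y - w) ^ 2 / a)) ≤
      ENNReal.ofReal (s / (c + 1) + √(π * a)) := by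
  have hgauss_le_one : ∀ y, exp (-(y - w) ^ 2 / a) ≤ 1 := fun y =>
    exp_le_one_iff.2 (div_nonpos_of_nonpos_of_nonneg (neg_nonpos.2 (sq_nonneg _)) ha.le)
  have hnear : ∫⁻ y in Ioc 0 s, ENNReal.ofReal (min 1 (y / s) ^ c * exp (-(y - w) ^ 2 / a)) ≤
      ENNReal.ofReal (s / (c + 1)) := by
    rw [← setLIntegral_Ioc_div_rpow hs hc]
    refine setLIntegral_mono (by fun_prop) fun y hy => ENNReal.ofReal_le_ofReal ?_
    rw [min_eq_right ((div_le_one hs).2 hy.2)]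
    exact mul_le_of_le_one_right (rpow_nonneg (div_nonneg hy.1.le hs.le) c) (hgauss_le_one y)
  have hfar : ∫⁻ y in Ioi s, ENNReal.ofReal (min 1 (y / s) ^ c * exp (-(y - w) ^ 2 / a)) ≤
      ENNReal.ofReal √(π * a) := by
    rw [← lintegral_exp_neg_sub_sq_div ha w]
    refine (setLIntegral_mono (by fun_prop) fun y hy => ?_).trans (setLIntegral_le_lintegral _ _)
    rw [min_eq_left ((one_le_div hs).2 (le_of_lt hy)), one_rpow, one_mul]
  rw [← Ioc_union_Ioi_eq_Ioi hs.le, lintegral_union measurableSet_Ioi (Ioc_disjoint_Ioi le_rfl),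
    ENNReal.ofReal_add (div_pos hs (by linarith)).le (sqrt_nonneg _)]
  exact add_le_add hnear hfar

theorem setLIntegral_Ioi_inv_sqrt_mul_min_rpow_mul_exp_le {c κ t : ℝ} (hc : -1 < c)
    (hκ : 0 < κ) (ht : 0 < t) (w : ℝ) :
    ∫⁻ y in Ioi 0, ENNReal.ofReal ((√t)⁻¹ * (min 1 (y / √t) ^ c * exp (-(y - w) ^ 2 / (κ * t)))) ≤
      ENNReal.ofReal (1 / (c + 1) + √(π * κ)) := by
  have hs : 0 < √t := sqrt_pos.2 ht
  simp_rw [ENNReal.ofReal_mul (inv_nonneg.2 hs.le)]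
  rw [lintegral_const_mul _ (by fun_prop)]
  refine (mul_le_mul_right
    (setLIntegral_Ioi_min_one_div_rpow_mul_exp_le hs hc (by positivity) w) _).trans_eq ?_
  rw [← ENNReal.ofReal_mul (inv_nonneg.2 hs.le), ← mul_assoc, sqrt_mul (by positivity) t]
  congr 1
  field_simp

theorem kernel_bound_uniformly_integrable (N : ℕ) (c κ : ℝ) (hc : -1 < c) (hκ : 0 < κ) :
    ∃ C : ℝ, 0 < C ∧
      ∀ t : ℝ, 0 < t → ∀ z₀ : EuclideanSpace ℝ (Fin N) × ℝ, 0 < z₀.2 →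
        ∫⁻ z in {z : EuclideanSpace ℝ (Fin N) × ℝ | 0 < z.2},
            ENNReal.ofReal (t ^ (-((N : ℝ) + 1) / 2) *
              (min 1 (z.2 / Real.sqrt t)) ^ c *
              Real.exp (-(‖z.1 - z₀.1‖ ^ 2 + (z.2 - z₀.2) ^ 2) / (κ * t))) ≤
          ENNReal.ofReal C := by
  refine ⟨(π * κ) ^ ((N : ℝ) / 2) * (1 / (c + 1) + √(π * κ)),
    mul_pos (by positivity)
      (add_pos_of_pos_of_nonneg (one_div_pos.2 (by linarith)) (sqrt_nonneg _)),
    fun t ht z₀ _ => ?_⟩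
  let f (x : EuclideanSpace ℝ (Fin N)) : ℝ≥0∞ :=
    ENNReal.ofReal (t ^ (-(N : ℝ) / 2) * exp (-‖x - z₀.1‖ ^ 2 / (κ * t)))
  let g (y : ℝ) : ℝ≥0∞ :=
    ENNReal.ofReal ((√t)⁻¹ * (min 1 (y / √t) ^ c * exp (-(y - z₀.2) ^ 2 / (κ * t))))
  have hpow : t ^ (-((N : ℝ) + 1) / 2) = t ^ (-(N : ℝ) / 2) * (√t)⁻¹ := by
    rw [sqrt_eq_rpow, ← rpow_neg ht.le, ← rpow_add ht]
    ring_nf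
  have hfactor (z : EuclideanSpace ℝ (Fin N) × ℝ) :
      ENNReal.ofReal (t ^ (-((N : ℝ) + 1) / 2) * min 1 (z.2 / √t) ^ c *
        exp (-(‖z.1 - z₀.1‖ ^ 2 + (z.2 - z₀.2) ^ 2) / (κ * t))) = f z.1 * g z.2 := by
    rw [← ENNReal.ofReal_mul (mul_nonneg (rpow_nonneg ht.le _) (exp_pos _).le), hpow,
      neg_add, add_div, exp_add]
    ring_nf
  have hspatial : ∫⁻ x, f x = ENNReal.ofReal ((π * κ) ^ ((N : ℝ) / 2)) := by
    simpa only [finrank_euclideanSpace_fin] using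
      lintegral_rpow_mul_exp_neg_norm_sub_sq_div_mul hκ ht z₀.1
  rw [lintegral_congr hfactor, setLIntegral_upperHalfSpace_mul (by fun_prop) (by fun_prop),
    hspatial, ENNReal.ofReal_mul (by positivity)]
  gcongr
  exact setLIntegral_Ioi_inv_sqrt_mul_min_rpow_mul_exp_le hc hκ ht z₀.2
end
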